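/- arXiv:0902.2259 — 3 statements merged into one kernel-verified Lean document; each statement's English description precedes it below -/
import Mathlib

section
/- In a very weak Hopf algebra, the antipode axioms S ⋆ 1 = t, 1 ⋆ S = r, and S ⋆ 1 ⋆ S = S together with the identity 1 ⋆ t = 1 imply 1 ⋆ S ⋆ 1 = 1, hence f ∘ g ∘ f = f for the fusion map f and g = (1 ⊗ μ)(1 ⊗ S ⊗ 1)(δ ⊗ 1). -/
open TensorProduct LinearMap

variable {k A : Type*} [CommRing k] [AddCommGroup A] [Module k A]

/-- Convolution `φ ⋆ ψ = μ(φ ⊗ ψ)δ`. -/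
noncomputable def conv (μ : A ⊗[k] A →ₗ[k] A) (δ : A →ₗ[k] A ⊗[k] A)
    (φ ψ : A →ₗ[k] A) : A →ₗ[k] A :=
  μ ∘ₗ TensorProduct.map φ ψ ∘ₗ δ

/-- The fusion map `f = (1 ⊗ μ)(δ ⊗ 1)`. -/
noncomputable def fusionMap (μ : A ⊗[k] A →ₗ[k] A) (δ : A →ₗ[k] A ⊗[k] A) :
    A ⊗[k] A →ₗ[k] A ⊗[k] A :=
  lTensor A μ ∘ₗ (TensorProduct.assoc k A A A).toLinearMap ∘ₗ δ.rTensor A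

/-- The map `g = (1 ⊗ μ)(1 ⊗ S ⊗ 1)(δ ⊗ 1)`. -/
noncomputable def fusionInvMap (μ : A ⊗[k] A →ₗ[k] A) (δ : A →ₗ[k] A ⊗[k] A)
    (S : A →ₗ[k] A) : A ⊗[k] A →ₗ[k] A ⊗[k] A :=
  lTensor A μ ∘ₗ lTensor A (S.rTensor A) ∘ₗ
    (TensorProduct.assoc k A A A).toLinearMap ∘ₗ δ.rTensor A

/-- The target map `t = (1 ⊗ εμ)(c ⊗ 1)(1 ⊗ δη)`, i.e. `a ↦ Σ ε(a·e₂) • e₁`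
where `δ(η(1)) = Σ e₁ ⊗ e₂`. -/
noncomputable def tMap (μ : A ⊗[k] A →ₗ[k] A) (δ : A →ₗ[k] A ⊗[k] A)
    (η : k →ₗ[k] A) (ε : A →ₗ[k] k) : A →ₗ[k] A :=
  (TensorProduct.rid k A).toLinearMap ∘ₗ lTensor A (ε ∘ₗ μ) ∘ₗ
    (TensorProduct.assoc k A A A).toLinearMap ∘ₗ
    (TensorProduct.comm k A A).toLinearMap.rTensor A ∘ₗ
    (TensorProduct.assoc k A A A).symm.toLinearMap ∘ₗ
    lTensor A (δ ∘ₗ η) ∘ₗ (TensorProduct.rid k A).symm.toLinearMap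

/-- The source map `r = (εμ ⊗ 1)(1 ⊗ c⁻¹)(δη ⊗ 1)`, i.e. `a ↦ Σ ε(e₁·a) • e₂`. -/
noncomputable def rMap (μ : A ⊗[k] A →ₗ[k] A) (δ : A →ₗ[k] A ⊗[k] A)
    (η : k →ₗ[k] A) (ε : A →ₗ[k] k) : A →ₗ[k] A :=
  (TensorProduct.lid k A).toLinearMap ∘ₗ (ε ∘ₗ μ).rTensor A ∘ₗ
    (TensorProduct.assoc k A A A).symm.toLinearMap ∘ₗ
    lTensor A (TensorProduct.comm k A A).toLinearMap ∘ₗ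
    (TensorProduct.assoc k A A A).toLinearMap ∘ₗ
    (δ ∘ₗ η).rTensor A ∘ₗ (TensorProduct.lid k A).symm.toLinearMap

/-- Auxiliary map `K φ = (1 ⊗ μ)(1 ⊗ φ ⊗ 1)(δ ⊗ 1)` (with the middle leg collected
as `(1 ⊗ φ)δ` on the first factor). -/
noncomputable def Kmap (μ : A ⊗[k] A →ₗ[k] A) (δ : A →ₗ[k] A ⊗[k] A)
    (φ : A →ₗ[k] A) : A ⊗[k] A →ₗ[k] A ⊗[k] A :=
  lTensor A μ ∘ₗ (TensorProduct.assoc k A A A).toLinearMap ∘ₗ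
    rTensor A (lTensor A φ ∘ₗ δ)

/-- Right multiplication by `b`. -/
noncomputable def rmul (μ : A ⊗[k] A →ₗ[k] A) (b : A) : A →ₗ[k] A :=
  μ ∘ₗ (TensorProduct.mk k A A).flip b

lemma Kmap_tmul (μ : A ⊗[k] A →ₗ[k] A) (δ : A →ₗ[k] A ⊗[k] A)
    (φ : A →ₗ[k] A) (a b : A) :
    Kmap μ δ φ (a ⊗ₜ[k] b) = lTensor A (rmul μ b ∘ₗ φ) (δ a) := by
  have h : ∀ c : A ⊗[k] A,
      lTensor A μ ((TensorProduct.assoc k A A A) ((lTensor A φ c) ⊗ₜ[k] b))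
        = lTensor A (rmul μ b ∘ₗ φ) c := by
    intro c
    induction c using TensorProduct.induction_on with
    | zero => simp
    | tmul x y => simp [rmul]
    | add x y hx hy => simp [add_tmul, hx, hy]
  simp [Kmap, h]

lemma Kmap_lTensor (μ : A ⊗[k] A →ₗ[k] A) (δ : A →ₗ[k] A ⊗[k] A)
    (φ G : A →ₗ[k] A) (c : A ⊗[k] A) :
    Kmap μ δ φ (lTensor A G c) =
      lTensor A μ ((TensorProduct.assoc k A A A)
        (TensorProduct.map (lTensor A φ ∘ₗ δ) G c)) := by
  induction c using TensorProduct.induction_on with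
  | zero => simp
  | tmul x y => simp [Kmap]
  | add x y hx hy => simp [hx, hy]

lemma assoc_nat (φ G : A →ₗ[k] A) (e : (A ⊗[k] A) ⊗[k] A) :
    (TensorProduct.assoc k A A A) (TensorProduct.map (lTensor A φ) G e) =
      lTensor A (TensorProduct.map φ G) ((TensorProduct.assoc k A A A) e) := by
  induction e using TensorProduct.induction_on with
  | zero => simp
  | tmul c z =>
    induction c using TensorProduct.induction_on with
    | zero => simp [zero_tmul]
    | tmul x y => simp
    | add u v hu hv =>
      simp only [map_tmul] at hu hv
      simp [add_tmul, hu, hv]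
  | add u v hu hv => simp [hu, hv]

lemma Kmap_comp (μ : A ⊗[k] A →ₗ[k] A) (δ : A →ₗ[k] A ⊗[k] A)
    (hμ : μ ∘ₗ μ.rTensor A =
      μ ∘ₗ μ.lTensor A ∘ₗ (TensorProduct.assoc k A A A).toLinearMap)
    (hδ : (TensorProduct.assoc k A A A).toLinearMap ∘ₗ δ.rTensor A ∘ₗ δ =
      δ.lTensor A ∘ₗ δ)
    (φ ψ : A →ₗ[k] A) :
    Kmap μ δ φ ∘ₗ Kmap μ δ ψ = Kmap μ δ (conv μ δ φ ψ) := by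
  have hmul : ∀ x y z : A, μ (μ (x ⊗ₜ[k] y) ⊗ₜ[k] z) = μ (x ⊗ₜ[k] μ (y ⊗ₜ[k] z)) := by
    intro x y z
    have := LinearMap.congr_fun hμ ((x ⊗ₜ[k] y) ⊗ₜ[k] z)
    simpa using this
  ext a b
  simp only [AlgebraTensorModule.curry_apply, curry_apply, coe_restrictScalars,
    LinearMap.coe_comp, Function.comp_apply]
  rw [Kmap_tmul, Kmap_lTensor, Kmap_tmul]
  have hsplit : TensorProduct.map (lTensor A φ ∘ₗ δ) (rmul μ b ∘ₗ ψ) (δ a)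
      = TensorProduct.map (lTensor A φ) (rmul μ b ∘ₗ ψ) (rTensor A δ (δ a)) := by
    have : TensorProduct.map (lTensor A φ ∘ₗ δ) (rmul μ b ∘ₗ ψ)
        = TensorProduct.map (lTensor A φ) (rmul μ b ∘ₗ ψ) ∘ₗ rTensor A δ := by
      ext x y
      simp
    rw [this]; rfl
  rw [hsplit, assoc_nat]
  have hδa : (TensorProduct.assoc k A A A) (rTensor A δ (δ a)) = lTensor A δ (δ a) := by
    have := LinearMap.congr_fun hδ a
    simpa using this
  rw [hδa, ← LinearMap.comp_apply, ← lTensor_comp, ← lTensor_comp_apply]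
  have hc : ∀ c : A ⊗[k] A,
      μ (TensorProduct.map φ (rmul μ b ∘ₗ ψ) c) =
        rmul μ b (μ (TensorProduct.map φ ψ c)) := by
    intro c
    induction c using TensorProduct.induction_on with
    | zero => simp
    | tmul u v => simp [rmul, TensorProduct.mk_apply, hmul]
    | add u v hu hv => simp [hu, hv]
  have hF : (μ ∘ₗ TensorProduct.map φ (rmul μ b ∘ₗ ψ)) ∘ₗ δ
      = rmul μ b ∘ₗ conv μ δ φ ψ := by
    ext y
    simpa [conv] using hc (δ y)
  rw [hF]

lemma fusion_eq_Kmap (μ : A ⊗[k] A →ₗ[k] A) (δ : A →ₗ[k] A ⊗[k] A) :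
    fusionMap μ δ = Kmap μ δ LinearMap.id := by
  simp [fusionMap, Kmap, lTensor_id]

lemma fusionInv_eq_Kmap (μ : A ⊗[k] A →ₗ[k] A) (δ : A →ₗ[k] A ⊗[k] A)
    (S : A →ₗ[k] A) :
    fusionInvMap μ δ S = Kmap μ δ S := by
  have key : ∀ (c : A ⊗[k] A) (b : A),
      lTensor A (S.rTensor A) ((TensorProduct.assoc k A A A) (c ⊗ₜ[k] b)) =
        (TensorProduct.assoc k A A A) ((lTensor A S c) ⊗ₜ[k] b) := by
    intro c b
    induction c using TensorProduct.induction_on with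
    | zero => simp [zero_tmul]
    | tmul x y => simp
    | add u v hu hv => simp [add_tmul, hu, hv]
  ext a b
  simp only [fusionInvMap, Kmap, AlgebraTensorModule.curry_apply, curry_apply,
    coe_restrictScalars, LinearMap.coe_comp, Function.comp_apply, rTensor_tmul,
    LinearEquiv.coe_coe]
  rw [key]

/-- in a very weak Hopf algebra, the antipode axioms
`S ⋆ 1 = t`, `1 ⋆ S = r`, `S ⋆ 1 ⋆ S = S` together with `1 ⋆ t = 1` imply
`1 ⋆ S ⋆ 1 = 1`, hence `f ∘ g ∘ f = f`. -/
theorem very_weak_hopf_fgf (μ : A ⊗[k] A →ₗ[k] A) (δ : A →ₗ[k] A ⊗[k] A)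
    (η : k →ₗ[k] A) (ε : A →ₗ[k] k) (S : A →ₗ[k] A)
    (hμ : μ ∘ₗ μ.rTensor A =
      μ ∘ₗ μ.lTensor A ∘ₗ (TensorProduct.assoc k A A A).toLinearMap)
    (hηl : μ ∘ₗ η.rTensor A ∘ₗ (TensorProduct.lid k A).symm.toLinearMap = LinearMap.id)
    (hηr : μ ∘ₗ η.lTensor A ∘ₗ (TensorProduct.rid k A).symm.toLinearMap = LinearMap.id)
    (hδ : (TensorProduct.assoc k A A A).toLinearMap ∘ₗ δ.rTensor A ∘ₗ δ =
      δ.lTensor A ∘ₗ δ)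
    (hεl : (TensorProduct.lid k A).toLinearMap ∘ₗ ε.rTensor A ∘ₗ δ = LinearMap.id)
    (hεr : (TensorProduct.rid k A).toLinearMap ∘ₗ ε.lTensor A ∘ₗ δ = LinearMap.id)
    (hsb : δ ∘ₗ μ = TensorProduct.map μ μ ∘ₗ
      (TensorProduct.tensorTensorTensorComm k A A A A).toLinearMap ∘ₗ
      TensorProduct.map δ δ)
    -- antipode axioms
    (hS1 : conv μ δ S LinearMap.id = tMap μ δ η ε)
    (hS2 : conv μ δ LinearMap.id S = rMap μ δ η ε)
    (hS3 : conv μ δ (conv μ δ S LinearMap.id) S = S)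
    -- 1 ⋆ t = 1 (a consequence of the semibialgebra axiom)
    (ht : conv μ δ LinearMap.id (tMap μ δ η ε) = LinearMap.id) :
    conv μ δ LinearMap.id (conv μ δ S LinearMap.id) = LinearMap.id ∧
    fusionMap μ δ ∘ₗ fusionInvMap μ δ S ∘ₗ fusionMap μ δ = fusionMap μ δ := by
  have hpt : conv μ δ LinearMap.id (conv μ δ S LinearMap.id) = LinearMap.id := by
    rw [hS1]; exact ht
  refine ⟨hpt, ?_⟩
  calc fusionMap μ δ ∘ₗ fusionInvMap μ δ S ∘ₗ fusionMap μ δ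
      = Kmap μ δ LinearMap.id ∘ₗ Kmap μ δ S ∘ₗ Kmap μ δ LinearMap.id := by
        rw [fusion_eq_Kmap, fusionInv_eq_Kmap]
    _ = Kmap μ δ LinearMap.id ∘ₗ Kmap μ δ (conv μ δ S LinearMap.id) := by
        rw [Kmap_comp μ δ hμ hδ]
    _ = Kmap μ δ (conv μ δ LinearMap.id (conv μ δ S LinearMap.id)) := by
        rw [Kmap_comp μ δ hμ hδ]
    _ = fusionMap μ δ := by rw [hpt, fusion_eq_Kmap]
end

section
/- In a very weak Hopf algebra, S ⋆ 1 ⋆ S = S implies g ∘ f ∘ g = g for f = (1 ⊗ μ)(δ ⊗ 1) and g = (1 ⊗ μ)(1 ⊗ S ⊗ 1)(δ ⊗ 1). -/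
open TensorProduct LinearMap

variable {k A : Type*} [CommRing k] [AddCommGroup A] [Module k A]

section AuxVWH

variable (μ : A ⊗[k] A →ₗ[k] A) (δ : A →ₗ[k] A ⊗[k] A)

/-- `Φ(P) = (1 ⊗ P)(assoc)(δ ⊗ 1)`. -/
noncomputable def PhiAux (P : A ⊗[k] A →ₗ[k] A) : A ⊗[k] A →ₗ[k] A ⊗[k] A :=
  lTensor A P ∘ₗ (TensorProduct.assoc k A A A).toLinearMap ∘ₗ δ.rTensor A

lemma PhiAux_tmul (P : A ⊗[k] A →ₗ[k] A) (a b : A) :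
    PhiAux δ P (a ⊗ₜ[k] b) =
      lTensor A P ((TensorProduct.assoc k A A A) ((δ a) ⊗ₜ[k] b)) := by
  simp [PhiAux]

/-- Auxiliary linear map `L_c : x ⊗ (y ⊗ z) ↦ x ⊗ P(y ⊗ Q(z ⊗ c))`. -/
noncomputable def LAux (P Q : A ⊗[k] A →ₗ[k] A) (c : A) :
    A ⊗[k] (A ⊗[k] A) →ₗ[k] A ⊗[k] A :=
  lTensor A P ∘ₗ lTensor A (lTensor A (Q ∘ₗ (TensorProduct.mk k A A).flip c))

lemma LAux_tmul (P Q : A ⊗[k] A →ₗ[k] A) (c x y z : A) :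
    LAux P Q c (x ⊗ₜ[k] (y ⊗ₜ[k] z)) = x ⊗ₜ[k] P (y ⊗ₜ[k] Q (z ⊗ₜ[k] c)) := by
  simp [LAux]

lemma aux1' (P Q : A ⊗[k] A →ₗ[k] A) (b v : A) (p : A ⊗[k] A) :
    lTensor A P ((TensorProduct.assoc k A A A) (p ⊗ₜ[k] Q (v ⊗ₜ[k] b))) =
      LAux P Q b ((TensorProduct.assoc k A A A) (p ⊗ₜ[k] v)) := by
  induction p using TensorProduct.induction_on with
  | zero => simp
  | tmul x y => simp [LAux_tmul]
  | add x y hx hy => simp [add_tmul, map_add, hx, hy]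

lemma aux1 (P Q : A ⊗[k] A →ₗ[k] A) (b : A) (w : A ⊗[k] A) :
    PhiAux δ P (lTensor A Q ((TensorProduct.assoc k A A A) (w ⊗ₜ[k] b))) =
      LAux P Q b ((TensorProduct.assoc k A A A) ((δ.rTensor A) w)) := by
  induction w using TensorProduct.induction_on with
  | zero => simp
  | tmul u v =>
      rw [rTensor_tmul]
      rw [show (TensorProduct.assoc k A A A) ((u ⊗ₜ[k] v) ⊗ₜ[k] b) =
        u ⊗ₜ[k] (v ⊗ₜ[k] b) from TensorProduct.assoc_tmul u v b]
      rw [lTensor_tmul, PhiAux_tmul]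
      exact aux1' P Q b v (δ u)
  | add x y hx hy => simp [add_tmul, map_add, hx, hy]

lemma aux2' (Q : A ⊗[k] A →ₗ[k] A) (b : A) (p : A ⊗[k] A) :
    lTensor A Q ((TensorProduct.assoc k A A A) (p ⊗ₜ[k] b)) =
      lTensor A (Q ∘ₗ (TensorProduct.mk k A A).flip b) p := by
  induction p using TensorProduct.induction_on with
  | zero => simp
  | tmul x y => simp
  | add x y hx hy => simp [add_tmul, map_add, hx, hy]

lemma aux2 (P Q : A ⊗[k] A →ₗ[k] A) (b : A) (w : A ⊗[k] A) :
    lTensor A (P ∘ₗ PhiAux δ Q) ((TensorProduct.assoc k A A A) (w ⊗ₜ[k] b)) =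
      LAux P Q b ((δ.lTensor A) w) := by
  induction w using TensorProduct.induction_on with
  | zero => simp
  | tmul u v =>
      rw [show (TensorProduct.assoc k A A A) ((u ⊗ₜ[k] v) ⊗ₜ[k] b) =
        u ⊗ₜ[k] (v ⊗ₜ[k] b) from TensorProduct.assoc_tmul u v b]
      rw [lTensor_tmul, lTensor_tmul, comp_apply, PhiAux_tmul, aux2']
      simp [LAux]
  | add x y hx hy => simp [add_tmul, map_add, hx, hy]

lemma phi_comp
    (hδ : (TensorProduct.assoc k A A A).toLinearMap ∘ₗ δ.rTensor A ∘ₗ δ =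
      δ.lTensor A ∘ₗ δ) (P Q : A ⊗[k] A →ₗ[k] A) :
    PhiAux δ P ∘ₗ PhiAux δ Q = PhiAux δ (P ∘ₗ PhiAux δ Q) := by
  refine TensorProduct.ext' fun a b => ?_
  have h := LinearMap.congr_fun hδ a
  simp only [coe_comp, Function.comp_apply, LinearEquiv.coe_coe] at h
  rw [coe_comp, Function.comp_apply, PhiAux_tmul δ Q, aux1,
    PhiAux_tmul δ (P ∘ₗ PhiAux δ Q), aux2, h]

lemma lmul
    (hμ : μ ∘ₗ μ.rTensor A =
      μ ∘ₗ μ.lTensor A ∘ₗ (TensorProduct.assoc k A A A).toLinearMap)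
    (U T : A →ₗ[k] A) :
    (μ ∘ₗ U.rTensor A) ∘ₗ PhiAux δ (μ ∘ₗ T.rTensor A) =
      μ ∘ₗ (conv μ δ U T).rTensor A := by
  refine TensorProduct.ext' fun a b => ?_
  simp only [coe_comp, Function.comp_apply, rTensor_tmul, conv]
  rw [PhiAux_tmul]
  generalize δ a = w
  induction w using TensorProduct.induction_on with
  | zero => simp
  | tmul x y =>
      have h := LinearMap.congr_fun hμ ((U x ⊗ₜ[k] T y) ⊗ₜ[k] b)
      simp only [coe_comp, Function.comp_apply, LinearEquiv.coe_coe,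
        rTensor_tmul, lTensor_tmul, TensorProduct.assoc_tmul] at h
      simp only [TensorProduct.assoc_tmul, lTensor_tmul, coe_comp,
        Function.comp_apply, rTensor_tmul, TensorProduct.map_tmul]
      exact h.symm
  | add x y hx hy => simp [add_tmul, map_add, hx, hy]

end AuxVWH

/-- in a very weak Hopf algebra, `S ⋆ 1 ⋆ S = S` implies
`g ∘ f ∘ g = g`. -/
theorem very_weak_hopf_gfg (μ : A ⊗[k] A →ₗ[k] A) (δ : A →ₗ[k] A ⊗[k] A)
    (η : k →ₗ[k] A) (ε : A →ₗ[k] k) (S : A →ₗ[k] A)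
    (hμ : μ ∘ₗ μ.rTensor A =
      μ ∘ₗ μ.lTensor A ∘ₗ (TensorProduct.assoc k A A A).toLinearMap)
    (hηl : μ ∘ₗ η.rTensor A ∘ₗ (TensorProduct.lid k A).symm.toLinearMap = LinearMap.id)
    (hηr : μ ∘ₗ η.lTensor A ∘ₗ (TensorProduct.rid k A).symm.toLinearMap = LinearMap.id)
    (hδ : (TensorProduct.assoc k A A A).toLinearMap ∘ₗ δ.rTensor A ∘ₗ δ =
      δ.lTensor A ∘ₗ δ)
    (hεl : (TensorProduct.lid k A).toLinearMap ∘ₗ ε.rTensor A ∘ₗ δ = LinearMap.id)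
    (hεr : (TensorProduct.rid k A).toLinearMap ∘ₗ ε.lTensor A ∘ₗ δ = LinearMap.id)
    (hsb : δ ∘ₗ μ = TensorProduct.map μ μ ∘ₗ
      (TensorProduct.tensorTensorTensorComm k A A A A).toLinearMap ∘ₗ
      TensorProduct.map δ δ)
    -- S ⋆ 1 ⋆ S = S
    (hS3 : conv μ δ S (conv μ δ LinearMap.id S) = S) :
    fusionInvMap μ δ S ∘ₗ fusionMap μ δ ∘ₗ fusionInvMap μ δ S =
      fusionInvMap μ δ S := by
  have hg : fusionInvMap μ δ S = PhiAux δ (μ ∘ₗ S.rTensor A) := by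
    simp only [fusionInvMap, PhiAux, lTensor_comp, comp_assoc]
  have hf : fusionMap μ δ = PhiAux δ μ := rfl
  have h1 : μ ∘ₗ PhiAux δ (μ ∘ₗ S.rTensor A) =
      μ ∘ₗ (conv μ δ LinearMap.id S).rTensor A := by
    have h := lmul μ δ hμ LinearMap.id S
    simpa [rTensor_id] using h
  rw [hg, hf, phi_comp δ hδ μ (μ ∘ₗ S.rTensor A), h1, phi_comp δ hδ,
    lmul μ δ hμ S (conv μ δ LinearMap.id S), hS3]
end

section
/- In any very weak bialgebra, the identity 1 ⋆ t = 1 holds, where t = (1 ⊗ εμ)(c ⊗ 1)(1 ⊗ δη). -/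
open TensorProduct LinearMap

variable {k A : Type*} [CommRing k] [AddCommGroup A] [Module k A]

/-- in any very weak bialgebra (associative unital `μ`,
coassociative counital `δ`, semibialgebra axiom), the identity `1 ⋆ t = 1`
holds, where `t = (1 ⊗ εμ)(c ⊗ 1)(1 ⊗ δη)`. -/
theorem very_weak_bialgebra_conv_t (μ : A ⊗[k] A →ₗ[k] A) (δ : A →ₗ[k] A ⊗[k] A)
    (η : k →ₗ[k] A) (ε : A →ₗ[k] k)
    (hμ : μ ∘ₗ μ.rTensor A =
      μ ∘ₗ μ.lTensor A ∘ₗ (TensorProduct.assoc k A A A).toLinearMap)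
    (hηl : μ ∘ₗ η.rTensor A ∘ₗ (TensorProduct.lid k A).symm.toLinearMap = LinearMap.id)
    (hηr : μ ∘ₗ η.lTensor A ∘ₗ (TensorProduct.rid k A).symm.toLinearMap = LinearMap.id)
    (hδ : (TensorProduct.assoc k A A A).toLinearMap ∘ₗ δ.rTensor A ∘ₗ δ =
      δ.lTensor A ∘ₗ δ)
    (hεl : (TensorProduct.lid k A).toLinearMap ∘ₗ ε.rTensor A ∘ₗ δ = LinearMap.id)
    (hεr : (TensorProduct.rid k A).toLinearMap ∘ₗ ε.lTensor A ∘ₗ δ = LinearMap.id)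
    (hsb : δ ∘ₗ μ = TensorProduct.map μ μ ∘ₗ
      (TensorProduct.tensorTensorTensorComm k A A A A).toLinearMap ∘ₗ
      TensorProduct.map δ δ) :
    conv μ δ LinearMap.id (tMap μ δ η ε) = LinearMap.id := by
  -- elementwise versions of the axioms
  have ha : ∀ a : A, μ (a ⊗ₜ[k] η 1) = a := fun a => by
    simpa using congrFun (congrArg DFunLike.coe hηr) a
  have hcε : ∀ a : A, (TensorProduct.rid k A) ((ε.lTensor A) (δ a)) = a := fun a => by
    simpa using congrFun (congrArg DFunLike.coe hεr) a
  have hsb' : ∀ a b : A, δ (μ (a ⊗ₜ[k] b)) =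
      (TensorProduct.map μ μ)
        ((TensorProduct.tensorTensorTensorComm k A A A A) (δ a ⊗ₜ[k] δ b)) := fun a b => by
    simpa using congrFun (congrArg DFunLike.coe hsb) (a ⊗ₜ[k] b)
  -- expression for tMap in terms of e := δ (η 1)
  have ht : ∀ b : A, tMap μ δ η ε b =
      (TensorProduct.rid k A) ((lTensor A (ε ∘ₗ μ))
        ((TensorProduct.assoc k A A A)
          (((TensorProduct.comm k A A).toLinearMap.rTensor A)
            ((TensorProduct.assoc k A A A).symm (b ⊗ₜ[k] δ (η 1)))))) := fun b => by
    simp [tMap]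
  -- key computation
  have key : ∀ (y e : A ⊗[k] A),
      μ ((TensorProduct.map LinearMap.id
        ((TensorProduct.rid k A).toLinearMap ∘ₗ lTensor A (ε ∘ₗ μ) ∘ₗ
          (TensorProduct.assoc k A A A).toLinearMap ∘ₗ
          (TensorProduct.comm k A A).toLinearMap.rTensor A ∘ₗ
          (TensorProduct.assoc k A A A).symm.toLinearMap ∘ₗ
          (TensorProduct.mk k A (A ⊗[k] A)).flip e)) y) =
      (TensorProduct.rid k A) ((ε.lTensor A) ((TensorProduct.map μ μ)
        ((TensorProduct.tensorTensorTensorComm k A A A A) (y ⊗ₜ[k] e)))) := by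
    intro y e
    induction y using TensorProduct.induction_on with
    | zero => simp
    | add u v hu hv =>
        simp only [map_add, TensorProduct.add_tmul] at *
        rw [hu, hv]
    | tmul a b =>
        simp only [TensorProduct.map_tmul, LinearMap.id_coe, id_eq,
          LinearMap.comp_apply, LinearMap.flip_apply, TensorProduct.mk_apply,
          LinearEquiv.coe_coe]
        induction e using TensorProduct.induction_on with
        | zero => simp
        | add u v hu hv =>
            simp only [TensorProduct.tmul_add, map_add] at *
            rw [hu, hv]
        | tmul c d =>
            simp only [TensorProduct.assoc_symm_tmul, LinearMap.rTensor_tmul,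
              LinearEquiv.coe_coe, TensorProduct.comm_tmul, TensorProduct.assoc_tmul,
              LinearMap.lTensor_tmul, LinearMap.comp_apply, TensorProduct.rid_tmul,
              TensorProduct.tensorTensorTensorComm_tmul, TensorProduct.map_tmul,
              LinearMap.id_coe, id_eq]
            rw [TensorProduct.tmul_smul, map_smul]
  ext a
  have h1 : conv μ δ LinearMap.id (tMap μ δ η ε) a =
      μ ((TensorProduct.map LinearMap.id
        ((TensorProduct.rid k A).toLinearMap ∘ₗ lTensor A (ε ∘ₗ μ) ∘ₗ
          (TensorProduct.assoc k A A A).toLinearMap ∘ₗ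
          (TensorProduct.comm k A A).toLinearMap.rTensor A ∘ₗ
          (TensorProduct.assoc k A A A).symm.toLinearMap ∘ₗ
          (TensorProduct.mk k A (A ⊗[k] A)).flip (δ (η 1)))) (δ a)) := by
    simp only [conv, LinearMap.comp_apply]
    congr 1
  rw [h1, key (δ a) (δ (η 1))]
  calc (TensorProduct.rid k A) ((ε.lTensor A) ((TensorProduct.map μ μ)
        ((TensorProduct.tensorTensorTensorComm k A A A A) (δ a ⊗ₜ[k] δ (η 1)))))
      = (TensorProduct.rid k A) ((ε.lTensor A) (δ (μ (a ⊗ₜ[k] η 1)))) := by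
        rw [hsb' a (η 1)]
    _ = a := by rw [ha a, hcε a]
end
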